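/- arXiv:1902.06476 — 2 statements merged into one kernel-verified Lean document; each statement's English description precedes it below -/
import Mathlib

section
/- Let X be a totally disconnected compact metrizable space and K a field. The map μ ↦ rk_μ, sending a Borel probability measure μ on X to the pseudo-rank function rk_μ(f) = μ({x : f(x) ≠ 0}) on C_K(X), is a bijection between the set of Borel probability measures on X and the set of pseudo-rank functions on C_K(X). Under this bijection, T-invariant measures correspond to T-invariant pseudo-rank functions, for any homeomorphism T of X. -/
open MeasureTheory Set
open scoped ENNReal

/-!
A pseudo-rank function `P` on `C_K(X)` is determined by its values on idempotents, i.e. on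
characteristic functions of clopen sets: `f` and the characteristic function `χ` of its support
satisfy `χ * f = f` and `f * f⁻¹ = χ`, so `P f = P χ`. On idempotents `P` is a finitely additive
content on the ring of clopen sets, and compactness makes every such content σ-subadditive;
since clopen sets generate the Borel σ-algebra, the content extends uniquely to a probability
measure. Invariance under `T` of a measure `μ` means `μ.map T⁻¹ = μ`, which by the same
uniqueness is equivalent to the equality of the rank functions of `μ.map T⁻¹` and `μ`.
-/

section Clopen

variable {X : Type*} [TopologicalSpace X]

theorem isSetRing_isClopen : IsSetRing {s : Set X | IsClopen s} where
  empty_mem := isClopen_empty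
  union_mem _ _ hs ht := hs.union ht
  sdiff_mem _ _ hs ht := hs.diff ht

/-- Compactness reduces countable subadditivity to finite subadditivity. -/
theorem MeasureTheory.AddContent.isSigmaSubadditive_of_isCompact_of_isOpen
    {C : Set (Set X)} (hC : IsSetRing C) (hcompact : ∀ s ∈ C, IsCompact s)
    (hopen : ∀ s ∈ C, IsOpen s) (m : AddContent ℝ≥0∞ C) : m.IsSigmaSubadditive := by
  intro f hf hf_iUnion
  obtain ⟨t, ht⟩ := (hcompact _ hf_iUnion).elim_finite_subcover f (fun i ↦ hopen _ (hf i))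
    subset_rfl
  calc m (⋃ i, f i) ≤ m (⋃ i ∈ t, f i) :=
        addContent_mono hC.isSetSemiring hf_iUnion (hC.biUnion_mem t fun i _ ↦ hf i) ht
    _ ≤ ∑ i ∈ t, m (f i) := addContent_biUnion_le hC fun i _ ↦ hf i
    _ ≤ ∑' i, m (f i) := ENNReal.sum_le_tsum t

theorem borel_eq_generateFrom_isClopen [T2Space X] [CompactSpace X] [TotallyDisconnectedSpace X]
    [SecondCountableTopology X] :
    borel X = MeasurableSpace.generateFrom {s : Set X | IsClopen s} :=
  isTopologicalBasis_isClopen.borel_eq_generateFrom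

end Clopen

namespace LocallyConstant

variable {X : Type*} [TopologicalSpace X]

section CharFn

variable {R : Type*} [Semiring R]

theorem charFn_empty : charFn R (isClopen_empty (X := X)) = 0 := by
  ext; simp [coe_charFn]

theorem charFn_univ : charFn R (isClopen_univ (X := X)) = 1 := by
  ext; simp [coe_charFn]

theorem charFn_inter {U V : Set X} (hU : IsClopen U) (hV : IsClopen V) :
    charFn R (hU.inter hV) = charFn R hU * charFn R hV := by
  ext; simp [coe_charFn, inter_indicator_one]

theorem charFn_union_of_disjoint {U V : Set X} (hU : IsClopen U) (hV : IsClopen V)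
    (h : Disjoint U V) : charFn R (hU.union hV) = charFn R hU + charFn R hV := by
  ext; simp [coe_charFn, indicator_union_of_disjoint h]

theorem isIdempotentElem_charFn {U : Set X} (hU : IsClopen U) :
    IsIdempotentElem (charFn R hU) := by
  rw [IsIdempotentElem, ← charFn_inter]; simp_rw [inter_self]

theorem charFn_mul_charFn_of_disjoint {U V : Set X} (hU : IsClopen U) (hV : IsClopen V)
    (h : Disjoint U V) : charFn R hU * charFn R hV = 0 := by
  rw [← charFn_inter]; simp_rw [h.inter_eq]; exact charFn_empty

end CharFn

theorem setOf_charFn_ne_zero {R : Type*} [MulZeroOneClass R] [Nontrivial R] {U : Set X}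
    (hU : IsClopen U) : {x | charFn R hU x ≠ 0} = U := by
  ext; simp [charFn_eq_zero]

variable {K : Type*} [DivisionRing K]

theorem isClopen_support (f : LocallyConstant X K) : IsClopen {x | f x ≠ 0} :=
  (f.isLocallyConstant.isClopen_fiber 0).compl

theorem charFn_support_mul_self (f : LocallyConstant X K) :
    charFn K f.isClopen_support * f = f := by
  ext x; by_cases hx : f x = 0 <;> simp [coe_charFn, hx]

theorem mul_map_inv_eq_charFn_support (f : LocallyConstant X K) :
    f * f.map (·⁻¹) = charFn K f.isClopen_support := by
  ext x; by_cases hx : f x = 0 <;> simp [coe_charFn, hx]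

end LocallyConstant

structure IsPseudoRankFunction {R : Type*} [Ring R] (P : R → ℝ) : Prop where
  nonneg : ∀ x, 0 ≤ P x
  map_zero : P 0 = 0
  map_one : P 1 = 1
  mul_le_left : ∀ x y, P (x * y) ≤ P x
  mul_le_right : ∀ x y, P (x * y) ≤ P y
  add_of_mul_eq_zero : ∀ e f, IsIdempotentElem e → IsIdempotentElem f → e * f = 0 →
    P (e + f) = P e + P f

namespace IsPseudoRankFunction

theorem eq_of_mul_eq {R : Type*} [Ring R] {P : R → ℝ} (hP : IsPseudoRankFunction P)
    {x y e : R} (hx : e * x = x) (he : x * y = e) : P x = P e :=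
  le_antisymm (hx ▸ hP.mul_le_left e x) (he ▸ hP.mul_le_left x y)

variable {X : Type*} [TopologicalSpace X] {K : Type*} [DivisionRing K]
  {P : LocallyConstant X K → ℝ}

theorem eq_charFn_support (hP : IsPseudoRankFunction P) (f : LocallyConstant X K) :
    P f = P (LocallyConstant.charFn K f.isClopen_support) :=
  hP.eq_of_mul_eq f.charFn_support_mul_self f.mul_map_inv_eq_charFn_support

open Classical in
noncomputable def clopenContent (hP : IsPseudoRankFunction P) :
    AddContent ℝ≥0∞ {s : Set X | IsClopen s} :=
  isSetRing_isClopen.addContent_of_union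
    (fun s ↦ if hs : IsClopen s then ENNReal.ofReal (P (LocallyConstant.charFn K hs)) else 0)
    (by simp [LocallyConstant.charFn_empty, hP.map_zero])
    (fun {s t} (hs : IsClopen s) (ht : IsClopen t) hst ↦ by
      rw [dif_pos (hs.union ht), dif_pos hs, dif_pos ht,
        LocallyConstant.charFn_union_of_disjoint hs ht hst, hP.add_of_mul_eq_zero _ _ (LocallyConstant.isIdempotentElem_charFn hs)
        (LocallyConstant.isIdempotentElem_charFn ht)
        (LocallyConstant.charFn_mul_charFn_of_disjoint hs ht hst),
        ENNReal.ofReal_add (hP.nonneg _) (hP.nonneg _)])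

theorem clopenContent_apply (hP : IsPseudoRankFunction P) {U : Set X} (hU : IsClopen U) :
    hP.clopenContent U = ENNReal.ofReal (P (LocallyConstant.charFn K hU)) :=
  dif_pos hU

variable [CompactSpace X] [T2Space X] [TotallyDisconnectedSpace X] [SecondCountableTopology X]
  [MeasurableSpace X] [BorelSpace X]

noncomputable def measure (hP : IsPseudoRankFunction P) : Measure X :=
  hP.clopenContent.measure isSetRing_isClopen.isSetSemiring
    (BorelSpace.measurable_eq.trans borel_eq_generateFrom_isClopen).le
    (AddContent.isSigmaSubadditive_of_isCompact_of_isOpen isSetRing_isClopen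
      (fun _ hs ↦ hs.isClosed.isCompact) (fun _ hs ↦ hs.isOpen) _)

theorem measure_apply_of_isClopen (hP : IsPseudoRankFunction P) {U : Set X} (hU : IsClopen U) :
    hP.measure U = ENNReal.ofReal (P (LocallyConstant.charFn K hU)) := by
  rw [measure, AddContent.measure_eq _ _ (BorelSpace.measurable_eq.trans borel_eq_generateFrom_isClopen) _ hU,
    clopenContent_apply]

instance isProbabilityMeasure_measure (hP : IsPseudoRankFunction P) :
    IsProbabilityMeasure hP.measure where
  measure_univ := by
    rw [hP.measure_apply_of_isClopen isClopen_univ, LocallyConstant.charFn_univ, hP.map_one,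
      ENNReal.ofReal_one]

theorem eq_toReal_measure_support (hP : IsPseudoRankFunction P) (f : LocallyConstant X K) :
    P f = (hP.measure {x | f x ≠ 0}).toReal := by
  rw [hP.measure_apply_of_isClopen f.isClopen_support, ENNReal.toReal_ofReal (hP.nonneg _),
    hP.eq_charFn_support]

end IsPseudoRankFunction

namespace MeasureTheory.Measure

variable {X : Type*} [TopologicalSpace X] [MeasurableSpace X] [BorelSpace X]

theorem ext_of_toReal_measure_support_eq [CompactSpace X] [T2Space X] [TotallyDisconnectedSpace X]
    [SecondCountableTopology X] {K : Type*} [DivisionRing K] {μ ν : Measure X}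
    [IsProbabilityMeasure μ] [IsProbabilityMeasure ν]
    (h : ∀ f : LocallyConstant X K, (μ {x | f x ≠ 0}).toReal = (ν {x | f x ≠ 0}).toReal) :
    μ = ν := by
  refine ext_of_generate_finite _ (BorelSpace.measurable_eq.trans borel_eq_generateFrom_isClopen)
    (fun _ hs _ ht _ ↦ hs.inter ht) (fun U hU ↦ ?_) (by simp)
  have hU' := h (LocallyConstant.charFn K hU)
  rwa [LocallyConstant.setOf_charFn_ne_zero, ENNReal.toReal_eq_toReal_iff' (measure_ne_top μ U)
    (measure_ne_top ν U)] at hU'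

theorem map_symm_eq_self_iff (μ : Measure X) (T : X ≃ₜ X) :
    μ.map T.symm = μ ↔ ∀ A, MeasurableSet A → μ (T '' A) = μ A := by
  refine ⟨fun h A hA ↦ ?_, fun h ↦ ext fun A hA ↦ ?_⟩
  · rw [T.image_eq_preimage_symm, ← map_apply T.symm.measurable hA, h]
  · rw [map_apply T.symm.measurable hA, ← T.image_eq_preimage_symm, h A hA]

end MeasureTheory.Measure

/-- for a totally disconnected compact metrizable space `X` and a field `K`,
the map `μ ↦ rk_μ`, `rk_μ f = μ {x | f x ≠ 0}`, is a bijection between Borel probability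
measures on `X` and pseudo-rank functions on `C_K(X)`; moreover, under this correspondence,
`T`-invariant measures correspond exactly to `T`-invariant pseudo-rank functions, for any
homeomorphism `T` of `X`. -/
theorem stmt9 {X : Type*} [TopologicalSpace X] [CompactSpace X]
    [TopologicalSpace.MetrizableSpace X] [TotallyDisconnectedSpace X]
    [MeasurableSpace X] [BorelSpace X]
    {K : Type*} [Field K] (T : X ≃ₜ X) :
    -- injectivity of μ ↦ rk_μ
    (∀ μ ν : Measure X, IsProbabilityMeasure μ → IsProbabilityMeasure ν →
      (∀ f : LocallyConstant X K, (μ {x | f x ≠ 0}).toReal = (ν {x | f x ≠ 0}).toReal) →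
      μ = ν) ∧
    -- surjectivity: every pseudo-rank function on C_K(X) is of the form rk_μ
    (∀ P : LocallyConstant X K → ℝ,
      (∀ f, 0 ≤ P f) → P 0 = 0 → P 1 = 1 →
      (∀ f g, P (f * g) ≤ P f ∧ P (f * g) ≤ P g) →
      (∀ e f, e * e = e → f * f = f → e * f = 0 → P (e + f) = P e + P f) →
      ∃ μ : Measure X, IsProbabilityMeasure μ ∧
        ∀ f : LocallyConstant X K, P f = (μ {x | f x ≠ 0}).toReal) ∧
    -- T-invariant measures correspond to T-invariant pseudo-rank functions
    (∀ μ : Measure X, IsProbabilityMeasure μ →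
      ((∀ A : Set X, MeasurableSet A → μ (⇑T '' A) = μ A) ↔
        (∀ f : LocallyConstant X K,
          (μ {x | (f.comap (T.symm : C(X, X))) x ≠ 0}).toReal
            = (μ {x | f x ≠ 0}).toReal))) := by
  
  refine ⟨fun μ ν _ _ ↦ Measure.ext_of_toReal_measure_support_eq,
    fun P h0 hz h1 hmul hadd ↦ ?_, fun μ _ ↦ ?_⟩
  · have hP : IsPseudoRankFunction P :=
      ⟨h0, hz, h1, fun f g ↦ (hmul f g).1, fun f g ↦ (hmul f g).2, hadd⟩
    exact ⟨hP.measure, inferInstance, hP.eq_toReal_measure_support⟩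
  · have hsupport (f : LocallyConstant X K) :
        μ.map T.symm {x | f x ≠ 0} = μ {x | f.comap (T.symm : C(X, X)) x ≠ 0} :=
      Measure.map_apply T.symm.measurable f.isClopen_support.isOpen.measurableSet
    have : IsProbabilityMeasure (μ.map T.symm) :=
      Measure.isProbabilityMeasure_map T.symm.measurable.aemeasurable
    rw [← Measure.map_symm_eq_self_iff]
    exact ⟨fun h f ↦ by rw [← hsupport, h],
      fun h ↦ Measure.ext_of_toReal_measure_support_eq fun f ↦ by rw [hsupport]; exact h f⟩
end

section
/- Let T be a homeomorphism of a totally disconnected compact metrizable space X, K a field, A = C_K(X) ⋊_T ℤ, and let y ∈ X be a periodic point of T of period l. Then there is a unique K-algebra homomorphism Ψ : A → M_l(K[t, t^{-1}]) sending f ∈ C_K(X) to diag(f(y), f(T(y)), …, f(T^{l−1}(y))) and sending t to the matrix u = t·(∑_{i=0}^{l−2} e_{i+1,i} + e_{0,l−1}), and the kernel of Ψ is the ideal of A generated by the functions in C_K(X) vanishing on the orbit {y, T(y), …, T^{l−1}(y)} together with a neighborhood condition (i.e., generated by C_{c,K}(X \ {y, T(y), …, T^{l−1}(y)})). -/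
open LaurentPolynomial

/-!
The map `F ↦ ∑ ι (F n) * tⁿ` identifies `ℤ →₀ C_K(X)` with `A`, and moving powers of `t` to the
right only uses the rule `t * ι f = ι (f ∘ T⁻¹) * t`. Hence `K`-algebra maps `A → R` correspond
to pairs `(φ, v)` of an algebra map `φ : C_K(X) → R` and a unit `v` obeying the same rule, the
map being `∑ ι (F n) * tⁿ ↦ ∑ φ (F n) * vⁿ`. The diagonal evaluation along the orbit of `y` and
the cyclic shift `u` obey it because `T` moves `Tⁱ y` to `Tⁱ⁺¹ y` cyclically. In the image of
`∑ ι (F m) * tᵐ`, the `tⁿ`-coefficient of the entry `(i, i - n)` is `F n (Tⁱ y)`, so the kernel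
consists of the sums all of whose coefficients vanish on the orbit.
-/

theorem Units.val_zpow_mul_eq_of_val_mul_eq {B M : Type*} [Monoid M] {a : B → M}
    {σ : Equiv.Perm B} {v : Mˣ} (h : ∀ f, ↑v * a f = a (σ f) * ↑v) (n : ℤ) (f : B) :
    ↑(v ^ n) * a f = a ((σ ^ n) f) * ↑(v ^ n) := by
  induction n using Int.induction_on generalizing f with
  | zero => simp
  | succ n ih =>
    rw [zpow_add_one, zpow_add_one, Units.val_mul, mul_assoc, h, ← mul_assoc, ih, mul_assoc,
      Equiv.Perm.mul_apply]
  | pred n ih =>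
    have h' : ↑v⁻¹ * a f = a (σ⁻¹ f) * ↑v⁻¹ := by
      rw [Units.inv_mul_eq_iff_eq_mul, ← mul_assoc, h,
        show σ (σ⁻¹ f) = f from σ.apply_symm_apply f, Units.mul_inv_cancel_right]
    rw [zpow_sub_one, zpow_sub_one, Units.val_mul, mul_assoc, h', ← mul_assoc, ih, mul_assoc,
      Equiv.Perm.mul_apply]

section LaurentSum

variable {K B A R : Type*} [CommSemiring K] [Semiring B] [Algebra K B]
  [Semiring A] [Algebra K A] [Semiring R] [Algebra K R]

noncomputable def laurentSum (φ : B →ₐ[K] R) (v : Rˣ) : (ℤ →₀ B) →ₗ[K] R :=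
  Finsupp.lsum K fun n => (LinearMap.mulRight K (↑(v ^ n) : R)).comp φ.toLinearMap

theorem laurentSum_apply (φ : B →ₐ[K] R) (v : Rˣ) (F : ℤ →₀ B) :
    laurentSum φ v F = F.sum fun n f => φ f * ↑(v ^ n) :=
  rfl

theorem laurentSum_single (φ : B →ₐ[K] R) (v : Rˣ) (n : ℤ) (f : B) :
    laurentSum φ v (Finsupp.single n f) = φ f * ↑(v ^ n) := by
  simp [laurentSum_apply]

theorem laurentSum_single_mul_single {φ : B →ₐ[K] R} {v : Rˣ} {σ : Equiv.Perm B}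
    (hφ : ∀ f, ↑v * φ f = φ (σ f) * ↑v) (m n : ℤ) (f g : B) :
    laurentSum φ v (Finsupp.single m f) * laurentSum φ v (Finsupp.single n g) =
      laurentSum φ v (Finsupp.single (m + n) (f * (σ ^ m) g)) := by
  simp only [laurentSum_single, zpow_add, Units.val_mul, map_mul]
  rw [mul_assoc, ← mul_assoc (↑(v ^ m) : R), Units.val_zpow_mul_eq_of_val_mul_eq hφ]
  simp only [mul_assoc]

theorem map_laurentSum (ι : B →ₐ[K] A) (t : Aˣ) (φ : B →ₐ[K] R) (v : Rˣ)
    (Ψ : A →ₐ[K] R) (hι : ∀ f, Ψ (ι f) = φ f) (ht : Ψ t = v) (F : ℤ →₀ B) :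
    Ψ (laurentSum ι t F) = laurentSum φ v F := by
  have hv : Units.map (Ψ : A →* R) t = v := Units.ext ht
  simp only [laurentSum_apply, map_finsuppSum, map_mul, hι]
  refine Finsupp.sum_congr fun n _ => ?_
  rw [← hv, ← map_zpow]
  rfl

theorem exists_algHom_map_laurentSum {ι : B →ₐ[K] A} {t : Aˣ} {σ : Equiv.Perm B}
    (hι : ∀ f, ↑t * ι f = ι (σ f) * ↑t) (hbasis : Function.Bijective (laurentSum ι t))
    {φ : B →ₐ[K] R} {v : Rˣ} (hφ : ∀ f, ↑v * φ f = φ (σ f) * ↑v) :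
    ∃ Ψ : A →ₐ[K] R, ∀ F, Ψ (laurentSum ι t F) = laurentSum φ v F := by
  let E := LinearEquiv.ofBijective (laurentSum ι t) hbasis
  let Ψ := laurentSum φ v ∘ₗ E.symm.toLinearMap
  have hΨ : ∀ F, Ψ (laurentSum ι t F) = laurentSum φ v F := fun F =>
    congrArg (laurentSum φ v) (E.symm_apply_apply F)
  have hmul : ∀ F G, Ψ (laurentSum ι t F * laurentSum ι t G) =
      Ψ (laurentSum ι t F) * Ψ (laurentSum ι t G) := by
    intro F G
    induction F using Finsupp.induction_linear with
    | zero => simp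
    | add F F' hF hF' => simp only [map_add, add_mul, hF, hF']
    | single m f =>
      induction G using Finsupp.induction_linear with
      | zero => simp
      | add G G' hG hG' => simp only [map_add, mul_add, hG, hG']
      | single n g =>
        rw [laurentSum_single_mul_single hι, hΨ, hΨ, hΨ, laurentSum_single_mul_single hφ]
  refine ⟨AlgHom.ofLinearMap Ψ ?_ ?_, hΨ⟩
  · simpa [laurentSum_single] using hΨ (Finsupp.single 0 1)
  · intro x z
    obtain ⟨F, rfl⟩ := hbasis.2 x
    obtain ⟨G, rfl⟩ := hbasis.2 z
    exact hmul F G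

theorem existsUnique_algHom_of_bijective_laurentSum {ι : B →ₐ[K] A} {t : Aˣ}
    {σ : Equiv.Perm B} (hι : ∀ f, ↑t * ι f = ι (σ f) * ↑t)
    (hbasis : Function.Bijective (laurentSum ι t)) {φ : B →ₐ[K] R} {v : Rˣ}
    (hφ : ∀ f, ↑v * φ f = φ (σ f) * ↑v) :
    ∃! Ψ : A →ₐ[K] R, (∀ f, Ψ (ι f) = φ f) ∧ Ψ t = v := by
  obtain ⟨Ψ, hΨ⟩ := exists_algHom_map_laurentSum hι hbasis hφ
  refine ⟨Ψ, ⟨fun f => ?_, ?_⟩, fun Ψ' ⟨hι', ht'⟩ => AlgHom.ext fun a => ?_⟩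
  · simpa [laurentSum_single] using hΨ (Finsupp.single 0 f)
  · simpa [laurentSum_single] using hΨ (Finsupp.single 1 1)
  · obtain ⟨F, rfl⟩ := hbasis.2 a
    rw [map_laurentSum ι t φ v Ψ' hι' ht', hΨ]

end LaurentSum

namespace Matrix

open scoped Fin.CommRing

variable {R : Type*} {l : ℕ} [NeZero l]

def cycleMatrix [Zero R] (c : R) : Matrix (Fin l) (Fin l) R :=
  of fun i j => if i = j + 1 then c else 0

theorem mul_cycleMatrix_apply [NonUnitalNonAssocSemiring R] (M : Matrix (Fin l) (Fin l) R)
    (c : R) (i j : Fin l) :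
    (M * cycleMatrix c : Matrix (Fin l) (Fin l) R) i j = M i (j + 1) * c := by
  rw [mul_apply, Finset.sum_eq_single (j + 1)] <;> simp +contextual [cycleMatrix]

theorem mul_transpose_cycleMatrix_apply [NonUnitalNonAssocSemiring R]
    (M : Matrix (Fin l) (Fin l) R) (c : R) (i j : Fin l) :
    (M * (cycleMatrix c)ᵀ : Matrix (Fin l) (Fin l) R) i j = M i (j - 1) * c := by
  rw [mul_apply, Finset.sum_eq_single (j - 1)] <;>
    simp +contextual [cycleMatrix, eq_sub_iff_add_eq, eq_comm]

def cycleUnit [Semiring R] (c : Rˣ) : (Matrix (Fin l) (Fin l) R)ˣ where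
  val := cycleMatrix ↑c
  inv := (cycleMatrix ↑c⁻¹)ᵀ
  val_inv := by
    ext i j
    rw [mul_transpose_cycleMatrix_apply, one_apply]
    simp [cycleMatrix]
  inv_val := by
    ext i j
    rw [mul_cycleMatrix_apply, one_apply]
    simp [cycleMatrix, @eq_comm _ j i]

theorem val_cycleUnit [Semiring R] (c : Rˣ) :
    ((cycleUnit c : (Matrix (Fin l) (Fin l) R)ˣ) : Matrix (Fin l) (Fin l) R) = cycleMatrix ↑c :=
  rfl

theorem val_inv_cycleUnit [Semiring R] (c : Rˣ) :
    (((cycleUnit c)⁻¹ : (Matrix (Fin l) (Fin l) R)ˣ) : Matrix (Fin l) (Fin l) R) =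
      (cycleMatrix (↑c⁻¹ : R))ᵀ :=
  rfl

theorem val_cycleUnit_zpow [Semiring R] (c : Rˣ) (n : ℤ) :
    ((cycleUnit c ^ n : (Matrix (Fin l) (Fin l) R)ˣ) : Matrix (Fin l) (Fin l) R) =
      of fun i j : Fin l => if i = j + n then ((c ^ n : Rˣ) : R) else 0 := by
  induction n using Int.induction_on with
  | zero => ext i j; simp [one_apply]
  | succ n ih =>
    simp only [_root_.zpow_add_one, Units.val_mul, ih, val_cycleUnit]
    ext i j
    rw [mul_cycleMatrix_apply, of_apply, of_apply, ite_mul, zero_mul,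
      show j + 1 + ((n : ℤ) : Fin l) = j + ((n + 1 : ℤ) : Fin l) by push_cast; ring]
  | pred n ih =>
    simp only [_root_.zpow_sub_one, Units.val_mul, ih, val_inv_cycleUnit]
    ext i j
    rw [mul_transpose_cycleMatrix_apply, of_apply, of_apply, ite_mul, zero_mul,
      show j - 1 + ((-n : ℤ) : Fin l) = j + ((-n - 1 : ℤ) : Fin l) by push_cast; ring]

theorem cycleMatrix_mul_diagonal [CommSemiring R] (c : R) (d : Fin l → R) :
    cycleMatrix c * diagonal d = diagonal (fun i => d (i - 1)) * cycleMatrix c := by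
  ext i j
  simp only [mul_diagonal, diagonal_mul, cycleMatrix, of_apply]
  split_ifs with h <;> simp [h, mul_comm]

end Matrix

namespace LaurentPolynomial

noncomputable def unitT (R : Type*) [Semiring R] : R[T;T⁻¹]ˣ where
  val := T 1
  inv := T (-1)
  val_inv := by rw [← T_add, add_neg_cancel, T_zero]
  inv_val := by rw [← T_add, neg_add_cancel, T_zero]

theorem val_unitT_zpow {R : Type*} [Semiring R] (n : ℤ) :
    ((unitT R ^ n : R[T;T⁻¹]ˣ) : R[T;T⁻¹]) = T n := by
  induction n using Int.induction_on with
  | zero => simp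
  | succ n ih => rw [zpow_add_one, Units.val_mul, ih, T_add]; rfl
  | pred n ih => rw [zpow_sub_one, Units.val_mul, ih, sub_eq_add_neg, T_add]; rfl

theorem coeff_C_mul_T {R : Type*} [Semiring R] (a : R) (m n : ℤ) :
    (C a * T m : R[T;T⁻¹]).coeff n = if m = n then a else 0 := by
  rw [← single_eq_C_mul_T, AddMonoidAlgebra.coeff_single, Finsupp.single_apply]

end LaurentPolynomial

theorem Fin.val_add_one_eq_mod {l : ℕ} [NeZero l] (j : Fin l) :
    ((j + 1 : Fin l) : ℕ) = (j + 1) % l := by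
  rw [Fin.val_add, Fin.val_one', Nat.add_mod_mod]

theorem Function.IsPeriodicPt.iterate_fin_add_one {α : Type*} {f : α → α} {x : α} {l : ℕ}
    [NeZero l] (h : IsPeriodicPt f l x) (j : Fin l) :
    f^[((j + 1 : Fin l) : ℕ)] x = f (f^[j] x) := by
  rw [Fin.val_add_one_eq_mod, h.iterate_mod_apply, Function.iterate_succ_apply']

namespace LocallyConstant

variable {X : Type*} [TopologicalSpace X] (K : Type*) [CommSemiring K]

def diagonalEval {R : Type*} [Semiring R] [Algebra K R] {n : Type*} [Fintype n] [DecidableEq n]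
    (p : n → X) : LocallyConstant X K →ₐ[K] Matrix n n R :=
  (Matrix.diagonalAlgHom K).comp (AlgHom.pi fun i => (Algebra.ofId K R).comp (evalₐ K (p i)))

theorem diagonalEval_apply {R : Type*} [Semiring R] [Algebra K R] {n : Type*} [Fintype n]
    [DecidableEq n] (p : n → X) (f : LocallyConstant X K) :
    (diagonalEval K p f : Matrix n n R) = Matrix.diagonal fun i => algebraMap K R (f (p i)) :=
  rfl

open scoped Fin.CommRing in
theorem cycleMatrix_mul_diagonalEval {R : Type*} [CommSemiring R] [Algebra K R] {l : ℕ}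
    [NeZero l] (T : X ≃ₜ X) {p : Fin l → X} (hp : ∀ j, p (j + 1) = T (p j)) (c : R)
    (f : LocallyConstant X K) :
    Matrix.cycleMatrix c * diagonalEval K p f =
      diagonalEval K p (congrLeftₐ K T f) * Matrix.cycleMatrix c := by
  rw [diagonalEval_apply, diagonalEval_apply, Matrix.cycleMatrix_mul_diagonal]
  congr
  funext i
  conv_rhs => rw [← sub_add_cancel i 1, hp]
  simp

open scoped Fin.CommRing in
theorem coeff_laurentSum_diagonalEval_cycleUnit {l : ℕ} [NeZero l] (p : Fin l → X)
    (F : ℤ →₀ LocallyConstant X K) (n : ℤ) (i : Fin l) :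
    ((laurentSum (diagonalEval K p) (Matrix.cycleUnit (unitT K)) F :
      Matrix (Fin l) (Fin l) K[T;T⁻¹]) i (i - n)).coeff n = F n (p i) := by
  have hterm : ∀ (m : ℤ) (f : LocallyConstant X K),
      ((diagonalEval K p f * (Matrix.cycleUnit (unitT K) ^ m).val :
        Matrix (Fin l) (Fin l) K[T;T⁻¹]) i (i - n)).coeff n = if m = n then f (p i) else 0 := by
    intro m f
    rw [diagonalEval_apply, Matrix.val_cycleUnit_zpow, Matrix.diagonal_mul, Matrix.of_apply,
      val_unitT_zpow, ← C_eq_algebraMap]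
    by_cases hmn : m = n
    · subst hmn
      rw [if_pos (by ring), coeff_C_mul_T, if_pos rfl]
    · split_ifs <;> simp [coeff_C_mul_T, hmn]
  rw [laurentSum_apply, Finsupp.sum, Matrix.sum_apply, AddMonoidAlgebra.coeff_sum]
  simp only [Finsupp.coe_finsetSum, Finset.sum_apply, hterm, Finset.sum_ite_eq', ite_eq_left_iff]
  intro hn
  rw [Finsupp.notMem_support_iff.1 hn]
  rfl

theorem laurentSum_diagonalEval_cycleUnit_eq_zero_iff {l : ℕ} [NeZero l] (p : Fin l → X)
    (F : ℤ →₀ LocallyConstant X K) :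
    laurentSum (diagonalEval K p) (Matrix.cycleUnit (unitT K)) F = 0 ↔
      ∀ n i, F n (p i) = 0 := by
  refine ⟨fun h n i => ?_, fun h => ?_⟩
  · simpa [h] using (coeff_laurentSum_diagonalEval_cycleUnit K p F n i).symm
  · rw [laurentSum_apply, Finsupp.sum]
    refine Finset.sum_eq_zero fun n _ => ?_
    rw [diagonalEval_apply, Matrix.diagonal_eq_zero.2 (funext fun i => by simp [h n i]), zero_mul]

end LocallyConstant

open LocallyConstant in
theorem stmt16_general {X : Type*} [TopologicalSpace X]
    {K : Type*} [Field K] (T : X ≃ₜ X)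
    {A : Type*} [Ring A] [Algebra K A] (ι : LocallyConstant X K →ₐ[K] A) (t : Aˣ)
    (hrel : ∀ f : LocallyConstant X K,
      (t : A) * ι f * ((t⁻¹ : Aˣ) : A) = ι (f.comap (T.symm : C(X, X))))
    (hbasis : Function.Bijective fun F : ℤ →₀ LocallyConstant X K =>
      F.sum fun n f => ι f * (((t ^ n : Aˣ) : A)))
    (y : X) (l : ℕ) (hl : 0 < l) (hper : (⇑T)^[l] y = y)
    (u : Matrix (Fin l) (Fin l) (LaurentPolynomial K))
    (hu : ∀ i j : Fin l, u i j =
      if (i : ℕ) = ((j : ℕ) + 1) % l then LaurentPolynomial.T 1 else 0) :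
    (∃! Ψ : A →ₐ[K] Matrix (Fin l) (Fin l) (LaurentPolynomial K),
      (∀ f : LocallyConstant X K,
        Ψ (ι f) = Matrix.diagonal fun i : Fin l =>
          LaurentPolynomial.C (f ((⇑T)^[(i : ℕ)] y))) ∧
      Ψ (t : A) = u) ∧
    (∀ Ψ : A →ₐ[K] Matrix (Fin l) (Fin l) (LaurentPolynomial K),
      ((∀ f : LocallyConstant X K,
        Ψ (ι f) = Matrix.diagonal fun i : Fin l =>
          LaurentPolynomial.C (f ((⇑T)^[(i : ℕ)] y))) ∧
        Ψ (t : A) = u) →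
      ∀ a : A, Ψ a = 0 ↔
        a ∈ TwoSidedIdeal.span
          {b : A | ∃ f : LocallyConstant X K,
            (∀ i : ℕ, i < l → f ((⇑T)^[i] y) = 0) ∧ b = ι f}) := by
  have : NeZero l := ⟨hl.ne'⟩
  set p : Fin l → X := fun i => (⇑T)^[i] y
  set φ : LocallyConstant X K →ₐ[K] Matrix (Fin l) (Fin l) K[T;T⁻¹] := diagonalEval K p
  have hφ_apply : ∀ f, Matrix.diagonal (fun i : Fin l => C (f ((⇑T)^[(i : ℕ)] y))) = φ f :=
    fun f => congrArg Matrix.diagonal (funext fun i => C_eq_algebraMap _)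
  obtain rfl : u = ((Matrix.cycleUnit (unitT K) : (Matrix (Fin l) (Fin l) K[T;T⁻¹])ˣ) :
      Matrix (Fin l) (Fin l) K[T;T⁻¹]) := Matrix.ext fun i j => by
    rw [hu, Matrix.val_cycleUnit, Matrix.cycleMatrix, Matrix.of_apply]
    exact if_congr (by rw [← Fin.val_add_one_eq_mod, Fin.val_inj]) rfl rfl
  have hι : ∀ f, ↑t * ι f = ι (congrLeftₐ K T f) * ↑t := fun f => by
    rw [← Units.mul_inv_eq_iff_eq_mul, hrel]; rfl
  have hbasis' : Function.Bijective (laurentSum ι t) := hbasis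
  simp only [hφ_apply]
  refine ⟨existsUnique_algHom_of_bijective_laurentSum (σ := (congrLeftₐ K T).toEquiv) hι
    hbasis' (cycleMatrix_mul_diagonalEval K T (Function.IsPeriodicPt.iterate_fin_add_one hper) _),
    fun Ψ ⟨hΨι, hΨt⟩ a => ⟨fun h0 => ?_, fun ha => ?_⟩⟩
  · obtain ⟨F, rfl⟩ := hbasis'.2 a
    rw [map_laurentSum ι t φ _ Ψ hΨι hΨt, laurentSum_diagonalEval_cycleUnit_eq_zero_iff] at h0
    exact sum_mem fun n _ => TwoSidedIdeal.mul_mem_right _ _ _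
      (TwoSidedIdeal.subset_span ⟨F n, fun i hi => h0 n ⟨i, hi⟩, rfl⟩)
  · rw [← TwoSidedIdeal.mem_ker]
    refine TwoSidedIdeal.mem_span_iff.1 ha _ ?_
    rintro _ ⟨f, hf, rfl⟩
    rw [SetLike.mem_coe, TwoSidedIdeal.mem_ker, hΨι f, diagonalEval_apply]
    exact Matrix.diagonal_eq_zero.2 (funext fun i => by simp [p, hf i i.isLt])

/-- let `A = C_K(X) ⋊_T ℤ` be the algebraic crossed product (presented by an
algebra map `ι : C_K(X) → A` and a unit `t` satisfying `t ι(f) t⁻¹ = ι(f ∘ T⁻¹)`, such that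
`(f_n)_n ↦ ∑ ι(f_n) tⁿ` is bijective), and let `y ∈ X` be a periodic point of `T` of period
`l`.  Then there is a unique `K`-algebra homomorphism `Ψ : A → M_l(K[t,t⁻¹])` with
`Ψ(f) = diag (f(y), …, f(T^{l-1}(y)))` and `Ψ(t) = t · (∑ e_{i+1,i} + e_{0,l-1})`, and the
kernel of `Ψ` is the two-sided ideal of `A` generated by
`C_{c,K}(X \ {y, T(y), …, T^{l-1}(y)})`, the locally constant functions vanishing on the
orbit of `y`. -/
theorem stmt16 {X : Type*} [TopologicalSpace X] [CompactSpace X]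
    [TopologicalSpace.MetrizableSpace X] [TotallyDisconnectedSpace X]
    {K : Type*} [Field K] (T : X ≃ₜ X)
    {A : Type*} [Ring A] [Algebra K A] (ι : LocallyConstant X K →ₐ[K] A) (t : Aˣ)
    (hrel : ∀ f : LocallyConstant X K,
      (t : A) * ι f * ((t⁻¹ : Aˣ) : A) = ι (f.comap (T.symm : C(X, X))))
    (hbasis : Function.Bijective fun F : ℤ →₀ LocallyConstant X K =>
      F.sum fun n f => ι f * (((t ^ n : Aˣ) : A)))
    (y : X) (l : ℕ) (hl : 0 < l) (hper : (⇑T)^[l] y = y)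
    (hmin : ∀ j : ℕ, 0 < j → j < l → (⇑T)^[j] y ≠ y)
    (u : Matrix (Fin l) (Fin l) (LaurentPolynomial K))
    (hu : ∀ i j : Fin l, u i j =
      if (i : ℕ) = ((j : ℕ) + 1) % l then LaurentPolynomial.T 1 else 0) :
    (∃! Ψ : A →ₐ[K] Matrix (Fin l) (Fin l) (LaurentPolynomial K),
      (∀ f : LocallyConstant X K,
        Ψ (ι f) = Matrix.diagonal fun i : Fin l =>
          LaurentPolynomial.C (f ((⇑T)^[(i : ℕ)] y))) ∧
      Ψ (t : A) = u) ∧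
    (∀ Ψ : A →ₐ[K] Matrix (Fin l) (Fin l) (LaurentPolynomial K),
      ((∀ f : LocallyConstant X K,
        Ψ (ι f) = Matrix.diagonal fun i : Fin l =>
          LaurentPolynomial.C (f ((⇑T)^[(i : ℕ)] y))) ∧
        Ψ (t : A) = u) →
      ∀ a : A, Ψ a = 0 ↔
        a ∈ TwoSidedIdeal.span
          {b : A | ∃ f : LocallyConstant X K,
            (∀ i : ℕ, i < l → f ((⇑T)^[i] y) = 0) ∧ b = ι f}) :=
  stmt16_general T ι t hrel hbasis y l hl hper u hu
end
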